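/- For every k ≥ 1, the loop p_k ∘ σ_1 : [0,1] → ℍ, which is a loop based at (0,0), is homotopic relative to its endpoints to the k!-fold concatenation c_k · c_k · ⋯ · c_k (defined on [0, k!·λ(k)] and affinely reparametrized to [0,1]). -/

import Mathlib

/-- The `j`-th entry (1-indexed) of a finite sequence of positive naturals,
viewed as a natural number. Only used for `1 ≤ j ≤ s.length`. -/
def nthSeq (s : List ℕ+) (j : ℕ) : ℕ := ↑(s.getD (j - 1) 1)

/-- The linear order `⪯` on finite sequences of positive natural numbers:
`s ⪯ t` iff either (a) there is an index `j ≤ min (ℓ s) (ℓ t)` which is the first index where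
`s` and `t` differ, and there `s j < t j`, or (b) `ℓ s ≤ ℓ t` and `t` extends `s`. -/
def sle (s t : List ℕ+) : Prop :=
  (∃ j, 1 ≤ j ∧ j ≤ min s.length t.length ∧
     (∀ i, 1 ≤ i → i < j → nthSeq s i = nthSeq t i) ∧ nthSeq s j < nthSeq t j) ∨
  (s.length ≤ t.length ∧ ∀ j, 1 ≤ j → j ≤ s.length → nthSeq s j = nthSeq t j)

/-- The strict version `≺` of the order `⪯`. -/
def slt (s t : List ℕ+) : Prop := sle s t ∧ s ≠ t

/-- The set `B` of nonempty sequences `s` with `s i ≤ i` for all `1 ≤ i ≤ ℓ s`. -/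
def BSet : Set (List ℕ+) := {s | 1 ≤ s.length ∧ ∀ i, 1 ≤ i → i ≤ s.length → nthSeq s i ≤ i}

/-- `λ n = 1 / (2^n n!)`. -/
noncomputable def lam (n : ℕ) : ℝ := 1 / ((2 : ℝ) ^ n * (n.factorial : ℝ))

/-- `τ s = Σ_{t ∈ B, t ≺ s} λ (ℓ t)`. -/
noncomputable def tau (s : List ℕ+) : ℝ :=
  ∑' t : {t : List ℕ+ // t ∈ BSet ∧ slt t s}, lam t.1.length

/-- The circle `L_n ⊂ ℝ² = ℂ` of radius `1/n` centred at `(1/n, 0)`. -/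
noncomputable def Lcirc (n : ℕ) : Set ℂ := Metric.sphere ((1 / (n : ℝ) : ℝ) : ℂ) (1 / (n : ℝ))

/-- The Hawaiian Earring `ℍ ⊂ ℝ² = ℂ`, the union of the circles `L_n`, `n ≥ 1`. -/
def HSet : Set ℂ := ⋃ n ∈ {n : ℕ | 1 ≤ n}, Lcirc n

open Classical in
/-- The metric `d` on the Hawaiian Earring: `d x y = ‖x - y‖` (Euclidean norm) if `x` and
`y` lie on a common circle `L_n`, and `d x y = ‖x‖ + ‖y‖` otherwise. -/
noncomputable def HEdist (x y : ℂ) : ℝ :=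
  if ∃ n : ℕ, 1 ≤ n ∧ x ∈ Lcirc n ∧ y ∈ Lcirc n then ‖x - y‖ else ‖x‖ + ‖y‖

/-- The loop `φ_n : [0,1] → ℍ` traversing the circle `L_n` at constant speed:
`φ_n t = (-cos(2πt)/n + 1/n, sin(2πt)/n)`. -/
noncomputable def phiLoop (n : ℕ) (t : ℝ) : ℂ :=
  Complex.ofReal (-(Real.cos (2 * Real.pi * t)) / n + 1 / n) +
    Complex.ofReal (Real.sin (2 * Real.pi * t) / n) * Complex.I

open Classical in
/-- The commutator loop `c_k : [0, λ k] → ℍ`: the concatenation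
`φ_{n_k} · φ_{n_k + 1} · φ_{n_k}⁻¹ · φ_{n_k + 1}⁻¹ : [0,4] → ℍ` precomposed with the
reparametrization `t ↦ 4 t / λ k`. -/
noncomputable def cLoop (nseq : ℕ → ℕ) (k : ℕ) (t : ℝ) : ℂ :=
  let u := 4 * t / lam k
  if u ≤ 1 then phiLoop (nseq k) u
  else if u ≤ 2 then phiLoop (nseq k + 1) (u - 1)
  else if u ≤ 3 then phiLoop (nseq k) (1 - (u - 2))
  else phiLoop (nseq k + 1) (1 - (u - 3))

open Classical in
/-- Concatenation of `f : [0,a] → ℂ` with `g` (translated to start at time `a`). -/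
noncomputable def concatAt (a : ℝ) (f g : ℝ → ℂ) : ℝ → ℂ :=
  fun t => if t ≤ a then f t else g (t - a)

/-- `iterConcat len f m` is the concatenation of `m + 1` copies of `f : [0, len] → ℂ`. -/
noncomputable def iterConcat (len : ℝ) (f : ℝ → ℂ) : ℕ → ℝ → ℂ
  | 0 => f
  | m + 1 => concatAt len f (iterConcat len f m)

open Classical in
/-- The retraction `p_k : ℍ → ℍ` onto `L_{n_k} ∪ L_{n_k + 1}`, which is the identity on
`L_{n_k} ∪ L_{n_k + 1}` and sends every other point to `(0,0)`. -/
noncomputable def pMap (nseq : ℕ → ℕ) (k : ℕ) (x : ℂ) : ℂ :=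
  if x ∈ Lcirc (nseq k) ∪ Lcirc (nseq k + 1) then x else 0

lemma zero_mem_HSet : (0 : ℂ) ∈ HSet := by
  have h1 : (0 : ℂ) ∈ Lcirc 1 := by
    simp [Lcirc, Metric.mem_sphere, Complex.dist_eq]
  exact Set.mem_biUnion (by norm_num : (1 : ℕ) ∈ {n : ℕ | 1 ≤ n}) h1

/-!
The intervals `[τ s, τ s + λ (ℓ s)]`, `s ∈ B`, do not overlap, and their lengths add up to
`∑_{m ≥ 1} m! λ m = ∑_{m ≥ 1} 2⁻ᵐ = 1`. On the interval of `s`, `σ₁` runs through `c_{ℓ s}`;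
off all intervals it sits at the base point, because right endpoints of intervals accumulate
there and `σ₁` is Lipschitz. The retraction `p_k` kills every `c_j` with `j ≠ k`, so `p_k ∘ σ₁`
is constant off the `k!` intervals of the length-`k` sequences and equals `c_k` on each of them.
Hence `p_k ∘ σ₁` is the `k!`-fold concatenation of `c_k` precomposed with the monotone time change
"time spent on length-`k` intervals so far", and a reparametrisation of a path is homotopic to it.
-/

open Finset
open scoped Nat

lemma nthSeq_add_one (s : List ℕ+) {i : ℕ} (hi : i < s.length) : nthSeq s (i + 1) = s[i] := by
  simp [nthSeq, List.getElem?_eq_getElem hi]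

lemma sle_prefix_clause_iff {s t : List ℕ+} :
    (s.length ≤ t.length ∧ ∀ j, 1 ≤ j → j ≤ s.length → nthSeq s j = nthSeq t j) ↔ s <+: t := by
  rw [List.prefix_iff_getElem]
  refine ⟨fun ⟨hlen, h⟩ => ⟨hlen, fun i hi => ?_⟩, fun ⟨hlen, h⟩ => ⟨hlen, fun j hj hjs => ?_⟩⟩
  · have := h (i + 1) (by omega) hi
    rwa [nthSeq_add_one s hi, nthSeq_add_one t (by omega), PNat.coe_inj] at this
  · obtain ⟨i, rfl⟩ : ∃ i, j = i + 1 := ⟨j - 1, by omega⟩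
    rw [nthSeq_add_one s (by omega), nthSeq_add_one t (by omega), h]

lemma sle_index_clause_iff {s t : List ℕ+} :
    (∃ j, 1 ≤ j ∧ j ≤ min s.length t.length ∧
      (∀ i, 1 ≤ i → i < j → nthSeq s i = nthSeq t i) ∧ nthSeq s j < nthSeq t j) ↔
    ∃ i, ∃ (h₁ : i < s.length) (h₂ : i < t.length),
      (∀ j (hj : j < i), s[j] = t[j]) ∧ s[i] < t[i] := by
  constructor
  · rintro ⟨j, hj, hjm, hagree, hlt⟩
    obtain ⟨i, rfl⟩ : ∃ i, j = i + 1 := ⟨j - 1, by omega⟩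
    have hs : i < s.length := by omega
    have ht : i < t.length := by omega
    refine ⟨i, hs, ht, fun j hj => ?_, ?_⟩
    · have := hagree (j + 1) (by omega) (by omega)
      rwa [nthSeq_add_one s (by omega), nthSeq_add_one t (by omega), PNat.coe_inj] at this
    · rwa [nthSeq_add_one s hs, nthSeq_add_one t ht, PNat.coe_lt_coe] at hlt
  · rintro ⟨i, hs, ht, hagree, hlt⟩
    refine ⟨i + 1, by omega, by omega, fun j hj hji => ?_, ?_⟩
    · obtain ⟨j, rfl⟩ : ∃ j', j = j' + 1 := ⟨j - 1, by omega⟩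
      rw [nthSeq_add_one s (by omega), nthSeq_add_one t (by omega), hagree j (by omega)]
    · rwa [nthSeq_add_one s hs, nthSeq_add_one t ht, PNat.coe_lt_coe]

theorem slt_iff_lt {s t : List ℕ+} : slt s t ↔ s < t := by
  rw [slt, sle, sle_prefix_clause_iff, sle_index_clause_iff, List.lt_iff_exists,
    ← List.prefix_iff_eq_take]
  constructor
  · rintro ⟨hindex | hprefix, hne⟩
    · exact Or.inr hindex
    · exact Or.inl ⟨hprefix, lt_of_le_of_ne hprefix.length_le fun h => hne (hprefix.eq_of_length h)⟩
  · rintro (⟨hprefix, hlen⟩ | hindex)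
    · exact ⟨Or.inr hprefix, by rintro rfl; exact lt_irrefl _ hlen⟩
    · refine ⟨Or.inl hindex, ?_⟩
      rintro rfl
      obtain ⟨i, _, _, _, hlt⟩ := hindex
      exact lt_irrefl _ hlt

lemma lt_append_one_iff {s t : List ℕ+} : t < s ++ [1] ↔ t ≤ s := by
  induction s generalizing t with
  | nil =>
    rcases t with _ | ⟨a, t⟩
    · simp [List.nil_lt_cons]
    · simp [List.cons_lt_cons_iff, List.not_lt_nil, le_iff_eq_or_lt]
  | cons b s ih =>
    rcases t with _ | ⟨a, t⟩
    · exact iff_of_true (List.nil_lt_cons _ _) (le_of_lt (List.nil_lt_cons b s))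
    · simp only [List.cons_append, List.cons_lt_cons_iff, ih, le_iff_eq_or_lt (a := a :: t),
        le_iff_eq_or_lt (a := t), List.cons.injEq]
      tauto

section CumulativeSum

variable {α : Type*} [LinearOrder α] {w : α → ℝ}

noncomputable def cumSum (w : α → ℝ) (s : α) : ℝ := ∑' t, (Set.Iio s).indicator w t

lemma cumSum_nonneg (hw₀ : 0 ≤ w) (s : α) : 0 ≤ cumSum w s :=
  tsum_nonneg fun _ => Set.indicator_nonneg (fun t _ => hw₀ t) _

lemma cumSum_add_self (hw : Summable w) (s : α) :
    cumSum w s + w s = ∑' t, (Set.Iic s).indicator w t := by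
  classical
  rw [← Set.Iio_union_right, Set.indicator_union_of_disjoint (s := Set.Iio s)
    (Set.disjoint_singleton_right.2 (lt_irrefl s)), (hw.indicator _).tsum_add (hw.indicator _),
    Set.indicator_singleton, tsum_pi_single, cumSum]

lemma cumSum_eq_add_of_Iio_eq_Iic (hw : Summable w) {s s' : α} (h : Set.Iio s' = Set.Iic s) :
    cumSum w s' = cumSum w s + w s := by
  rw [cumSum_add_self hw, cumSum, h]

lemma cumSum_add_le_cumSum (hw₀ : 0 ≤ w) (hw : Summable w) {s s' : α} (h : s < s') :
    cumSum w s + w s ≤ cumSum w s' := by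
  rw [cumSum_add_self hw]
  exact (hw.indicator _).tsum_le_tsum
    (Set.indicator_le_indicator_of_subset (Set.Iic_subset_Iio.2 h) hw₀) (hw.indicator _)

lemma cumSum_add_le_tsum (hw₀ : 0 ≤ w) (hw : Summable w) (s : α) :
    cumSum w s + w s ≤ ∑' t, w t := by
  rw [cumSum_add_self hw]
  exact (hw.indicator _).tsum_le_tsum (Set.indicator_le_self' fun t _ => hw₀ t) hw

/-- The interval with the largest `x` ends after all the others. -/
lemma sum_le_of_forall_cumSum_add_le (hw₀ : 0 ≤ w) (hw : Summable w) {G : Finset α} {b : ℝ}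
    (hb : 0 ≤ b) (hG : ∀ x ∈ G, cumSum w x + w x ≤ b) : ∑ x ∈ G, w x ≤ b := by
  rcases G.eq_empty_or_nonempty with rfl | hne
  · simpa using hb
  calc ∑ x ∈ G, w x = ∑ x ∈ G, (Set.Iic (G.max' hne)).indicator w x :=
        Finset.sum_congr rfl fun x hx =>
          (Set.indicator_of_mem (Set.mem_Iic.2 (G.le_max' x hx)) w).symm
    _ ≤ ∑' x, (Set.Iic (G.max' hne)).indicator w x :=
        (hw.indicator _).sum_le_tsum G fun x _ => Set.indicator_nonneg (fun y _ => hw₀ y) x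
    _ = cumSum w (G.max' hne) + w (G.max' hne) := (cumSum_add_self hw _).symm
    _ ≤ b := hG _ (G.max'_mem hne)

lemma sum_le_of_forall_le_cumSum (hw₀ : 0 ≤ w) (hw : Summable w) {G : Finset α} {a : ℝ}
    (ha : a ≤ ∑' t, w t) (hG : ∀ x ∈ G, a ≤ cumSum w x) : ∑ x ∈ G, w x ≤ ∑' t, w t - a := by
  rcases G.eq_empty_or_nonempty with rfl | hne
  · simpa using ha
  set m := G.min' hne
  have hsplit : ∑' t, w t = cumSum w m + ∑' t, (Set.Ici m).indicator w t := by
    rw [cumSum, ← Set.compl_Iio, ← (hw.indicator _).tsum_add (hw.indicator _)]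
    exact tsum_congr fun t => (congrFun (Set.indicator_self_add_compl _ w) t).symm
  calc ∑ x ∈ G, w x = ∑ x ∈ G, (Set.Ici m).indicator w x :=
        Finset.sum_congr rfl fun x hx =>
          (Set.indicator_of_mem (Set.mem_Ici.2 (G.min'_le x hx)) w).symm
    _ ≤ ∑' x, (Set.Ici m).indicator w x :=
        (hw.indicator _).sum_le_tsum G fun x _ => Set.indicator_nonneg (fun y _ => hw₀ y) x
    _ ≤ ∑' t, w t - a := by linarith [hG m (G.min'_mem hne)]

/-- Otherwise the intervals `[cumSum w s, cumSum w s + w s]` would all miss `(t - ε, t)`, and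
could not fill up their total length `∑' w`. -/
theorem exists_cumSum_add_mem_Ioo (hw₀ : 0 ≤ w) (hw : Summable w) {t ε : ℝ}
    (ht : t ≤ ∑' x, w x) (hε : 0 < ε) (hεt : ε ≤ t)
    (hgap : ∀ s, w s ≠ 0 → t ∉ Set.Icc (cumSum w s) (cumSum w s + w s)) :
    ∃ s, w s ≠ 0 ∧ cumSum w s + w s ∈ Set.Ioo (t - ε) t := by
  classical
  by_contra! hfar
  have hsplit : ∀ s, w s ≠ 0 → cumSum w s + w s ≤ t - ε ∨ t ≤ cumSum w s := by
    intro s hs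
    by_cases hleft : cumSum w s + w s ≤ t - ε
    · exact Or.inl hleft
    · have hright : t ≤ cumSum w s + w s :=
        not_lt.1 fun h => hfar s hs ⟨not_le.1 hleft, h⟩
      have hout := hgap s hs
      rw [Set.mem_Icc, not_and_or, not_le, not_le] at hout
      exact Or.inr (hout.resolve_right hright.not_gt).le
  have hfinite (G : Finset α) : ∑ x ∈ G, w x ≤ ∑' x, w x - ε := by
    set G' := {x ∈ G | w x ≠ 0}
    have hleft : ∑ x ∈ G' with cumSum w x + w x ≤ t - ε, w x ≤ t - ε :=
      sum_le_of_forall_cumSum_add_le hw₀ hw (by linarith) fun x hx => (Finset.mem_filter.1 hx).2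
    have hright : ∑ x ∈ G' with ¬ cumSum w x + w x ≤ t - ε, w x ≤ ∑' x, w x - t :=
      sum_le_of_forall_le_cumSum hw₀ hw ht fun x hx => by
        obtain ⟨hx, hnot⟩ := Finset.mem_filter.1 hx
        exact (hsplit x (Finset.mem_filter.1 hx).2).resolve_left hnot
    rw [← Finset.sum_filter_ne_zero,
      ← Finset.sum_filter_add_sum_filter_not _ fun x => cumSum w x + w x ≤ t - ε]
    linarith
  linarith [hw.tsum_le_of_sum_le hfinite]

end CumulativeSum

lemma lam_pos (n : ℕ) : 0 < lam n := by
  unfold lam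
  positivity

lemma factorial_mul_lam (n : ℕ) : (n ! : ℝ) * lam n = (1 / 2) ^ n := by
  rw [lam, one_div_pow]
  field_simp

lemma mem_BSet_iff {s : List ℕ+} :
    s ∈ BSet ↔ 1 ≤ s.length ∧ ∀ i (hi : i < s.length), (s[i] : ℕ) ≤ i + 1 := by
  refine and_congr_right fun _ => ⟨fun h i hi => ?_, fun h j hj hjs => ?_⟩
  · simpa [nthSeq_add_one s hi] using h (i + 1) (by omega) hi
  · obtain ⟨i, rfl⟩ : ∃ i, j = i + 1 := ⟨j - 1, by omega⟩
    rw [nthSeq_add_one s (by omega)]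
    exact h i _

def BTuples (m : ℕ) : Finset (Fin m → ℕ+) :=
  Fintype.piFinset fun i => Icc 1 (i : ℕ).succPNat

lemma card_BTuples (m : ℕ) : #(BTuples m) = m ! := by
  simp [BTuples, Fintype.card_piFinset, PNat.card_Icc, Fin.prod_univ_eq_prod_range (· + 1),
    Finset.prod_range_add_one_eq_factorial]

lemma ofFn_mem_BSet_iff {m : ℕ} {v : Fin m → ℕ+} : List.ofFn v ∈ BSet ↔ 1 ≤ m ∧ v ∈ BTuples m := by
  simp only [mem_BSet_iff, List.length_ofFn, List.getElem_ofFn, BTuples, Fintype.mem_piFinset,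
    mem_Icc, ← PNat.coe_le_coe (v _), Nat.succPNat_coe]
  exact and_congr_right fun _ =>
    ⟨fun h i => ⟨one_le, h i i.2⟩, fun h i hi => (h ⟨i, hi⟩).2⟩

noncomputable def weightB : List ℕ+ → ℝ := BSet.indicator fun s => lam s.length

lemma weightB_nonneg : 0 ≤ weightB := fun _ => Set.indicator_nonneg (fun _ _ => (lam_pos _).le) _

lemma weightB_of_mem {s : List ℕ+} (hs : s ∈ BSet) : weightB s = lam s.length :=
  Set.indicator_of_mem hs _

lemma weightB_ne_zero_iff {s : List ℕ+} : weightB s ≠ 0 ↔ s ∈ BSet := by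
  simp [weightB, (lam_pos _).ne']

theorem hasSum_weightB : HasSum weightB 1 := by
  set e := (List.equivSigmaTuple (α := ℕ+)).symm
  set g : ℕ → ℝ := fun m => ∑ v ∈ BTuples m, weightB (List.ofFn v)
  have hfiber (m : ℕ) : HasSum (fun v : Fin m → ℕ+ => weightB (e ⟨m, v⟩)) (g m) :=
    hasSum_sum_of_ne_finset_zero fun v hv =>
      Set.indicator_of_notMem (fun h => hv (ofFn_mem_BSet_iff.1 h).2) _
  have hg_zero : g 0 = 0 :=
    Finset.sum_eq_zero fun v _ =>
      Set.indicator_of_notMem (fun h => (ofFn_mem_BSet_iff.1 h).1.not_gt zero_lt_one) _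
  have hg_succ (m : ℕ) : g (m + 1) = 1 / 2 / 2 ^ m := by
    simp only [g]
    rw [Finset.sum_congr rfl fun v hv => weightB_of_mem (ofFn_mem_BSet_iff.2 ⟨by omega, hv⟩)]
    simp only [List.length_ofFn, Finset.sum_const, card_BTuples, nsmul_eq_mul, factorial_mul_lam]
    rw [one_div_pow, pow_succ]
    ring
  have hg : HasSum g 1 := by
    rw [← hasSum_nat_add_iff' 1]
    simpa [hg_succ, hg_zero] using hasSum_geometric_two' 1
  have hsummable : Summable (weightB ∘ e) :=
    (summable_sigma_of_nonneg fun _ => weightB_nonneg _).2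
      ⟨fun m => (hfiber m).summable, by simpa only [(hfiber _).tsum_eq] using hg.summable⟩
  rw [← e.hasSum_iff]
  convert hsummable.hasSum
  exact hg.unique (hsummable.hasSum.sigma hfiber)

lemma tau_eq_cumSum (s : List ℕ+) : tau s = cumSum weightB s := by
  have hset : {t | t ∈ BSet ∧ slt t s} = Set.Iio s ∩ BSet := by
    ext t
    simp [slt_iff_lt, and_comm]
  refine (tsum_subtype {t | t ∈ BSet ∧ slt t s} fun t => lam t.length).trans ?_
  rw [cumSum, weightB, Set.indicator_indicator, hset]

lemma tau_nonneg (s : List ℕ+) : 0 ≤ tau s :=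
  tau_eq_cumSum s ▸ cumSum_nonneg weightB_nonneg s

lemma tau_append_one {s : List ℕ+} (hs : s ∈ BSet) : tau (s ++ [1]) = tau s + lam s.length := by
  rw [tau_eq_cumSum, tau_eq_cumSum, cumSum_eq_add_of_Iio_eq_Iic hasSum_weightB.summable
    (Set.ext fun _ => lt_append_one_iff), weightB_of_mem hs]

lemma tau_add_lam_le_tau {s s' : List ℕ+} (hs : s ∈ BSet) (h : s < s') :
    tau s + lam s.length ≤ tau s' := by
  rw [tau_eq_cumSum, tau_eq_cumSum, ← weightB_of_mem hs]
  exact cumSum_add_le_cumSum weightB_nonneg hasSum_weightB.summable h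

lemma tau_add_lam_le_one {s : List ℕ+} (hs : s ∈ BSet) : tau s + lam s.length ≤ 1 := by
  rw [tau_eq_cumSum, ← weightB_of_mem hs, ← hasSum_weightB.tsum_eq]
  exact cumSum_add_le_tsum weightB_nonneg hasSum_weightB.summable s

lemma tau_singleton_one : tau [1] = 0 := by
  have hnil : weightB [] = 0 := Set.indicator_of_notMem (by simp [BSet]) _
  rw [tau_eq_cumSum, ← List.nil_append [1], cumSum_eq_add_of_Iio_eq_Iic
    hasSum_weightB.summable (Set.ext fun _ => lt_append_one_iff), hnil, add_zero, cumSum]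
  simp [List.not_lt_nil]

lemma exists_tau_add_lam_mem_Ioo {t ε : ℝ} (ht : t ≤ 1) (hε : 0 < ε) (hεt : ε ≤ t)
    (hgap : ∀ s ∈ BSet, t ∉ Set.Icc (tau s) (tau s + lam s.length)) :
    ∃ s ∈ BSet, tau s + lam s.length ∈ Set.Ioo (t - ε) t := by
  obtain ⟨s, hs, hmem⟩ := exists_cumSum_add_mem_Ioo weightB_nonneg hasSum_weightB.summable
    (hasSum_weightB.tsum_eq.symm ▸ ht) hε hεt fun s hs => by
      rw [weightB_ne_zero_iff] at hs
      rw [← tau_eq_cumSum, weightB_of_mem hs]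
      exact hgap s hs
  rw [weightB_ne_zero_iff] at hs
  rw [← tau_eq_cumSum, weightB_of_mem hs] at hmem
  exact ⟨s, hs, hmem⟩

lemma normSq_eq_of_mem_sphere {r : ℝ} {x : ℂ} (hx : x ∈ Metric.sphere (r : ℂ) r) :
    Complex.normSq x = 2 * r * x.re := by
  rw [Metric.mem_sphere, Complex.dist_eq] at hx
  have hsq := congrArg (· ^ 2) hx
  simp only [Complex.sq_norm, Complex.normSq_apply, Complex.sub_re, Complex.sub_im,
    Complex.ofReal_re, Complex.ofReal_im, sub_zero] at hsq ⊢
  linarith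

/-- This includes `m = 0`, where `1 / 0 = 0` makes `L_0 = {0}`. -/
lemma eq_zero_of_mem_Lcirc_of_mem_Lcirc {m n : ℕ} {x : ℂ} (hmn : m ≠ n) (hm : x ∈ Lcirc m)
    (hn : x ∈ Lcirc n) : x = 0 := by
  have hradius : 1 / (m : ℝ) ≠ 1 / (n : ℝ) := by simpa [one_div, inv_inj] using hmn
  have hm' := normSq_eq_of_mem_sphere hm
  have hn' := normSq_eq_of_mem_sphere hn
  have hre : x.re = 0 := by
    by_contra hre
    exact hradius (by nlinarith [mul_right_cancel₀ hre (hm'.symm.trans hn')])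
  rwa [hre, mul_zero, Complex.normSq_eq_zero] at hm'

lemma Lcirc_subset_HSet (n : ℕ) : Lcirc n ⊆ HSet := by
  rcases Nat.eq_zero_or_pos n with rfl | hn
  · intro x hx
    obtain rfl : x = 0 := by simpa [Lcirc] using hx
    exact zero_mem_HSet
  · exact fun x hx => Set.mem_biUnion hn hx

lemma HEdist_zero_right (x : ℂ) : HEdist x 0 = ‖x‖ := by
  unfold HEdist
  split_ifs <;> simp

lemma phiLoop_mem (n : ℕ) (t : ℝ) : phiLoop n t ∈ Lcirc n := by
  rw [Lcirc, Metric.mem_sphere, Complex.dist_eq, phiLoop]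
  have hdiff : Complex.ofReal (-Real.cos (2 * Real.pi * t) / n + 1 / n) +
      Complex.ofReal (Real.sin (2 * Real.pi * t) / n) * Complex.I - ((1 / (n : ℝ) : ℝ) : ℂ) =
      Complex.ofReal (-Real.cos (2 * Real.pi * t) / n) +
        Complex.ofReal (Real.sin (2 * Real.pi * t) / n) * Complex.I := by
    push_cast
    ring
  rw [hdiff, Complex.norm_add_mul_I, div_pow, div_pow, neg_sq, ← add_div, Real.cos_sq_add_sin_sq,
    Real.sqrt_div' _ (sq_nonneg _), Real.sqrt_one, Real.sqrt_sq (Nat.cast_nonneg n)]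

lemma phiLoop_zero (n : ℕ) : phiLoop n 0 = 0 := by
  simp [phiLoop, neg_div]

lemma phiLoop_one (n : ℕ) : phiLoop n 1 = 0 := by
  simp [phiLoop, neg_div]

lemma continuous_phiLoop (n : ℕ) : Continuous (phiLoop n) := by
  unfold phiLoop
  fun_prop

lemma cLoop_mem (nseq : ℕ → ℕ) (k : ℕ) (t : ℝ) :
    cLoop nseq k t ∈ Lcirc (nseq k) ∪ Lcirc (nseq k + 1) := by
  unfold cLoop
  dsimp only
  split_ifs
  exacts [Or.inl (phiLoop_mem _ _), Or.inr (phiLoop_mem _ _), Or.inl (phiLoop_mem _ _),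
    Or.inr (phiLoop_mem _ _)]

lemma cLoop_zero (nseq : ℕ → ℕ) (k : ℕ) : cLoop nseq k 0 = 0 := by
  simp [cLoop, phiLoop_zero]

lemma cLoop_lam (nseq : ℕ → ℕ) (k : ℕ) : cLoop nseq k (lam k) = 0 := by
  norm_num [cLoop, mul_div_assoc, div_self (lam_pos k).ne', phiLoop_zero]

lemma cLoop_lam_eq_cLoop_zero (nseq : ℕ → ℕ) (k : ℕ) : cLoop nseq k (lam k) = cLoop nseq k 0 := by
  rw [cLoop_lam, cLoop_zero]

lemma continuous_cLoop (nseq : ℕ → ℕ) (k : ℕ) : Continuous (cLoop nseq k) := by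
  have hu : Continuous fun t : ℝ => 4 * t / lam k := by fun_prop
  refine Continuous.if_le ((continuous_phiLoop _).comp hu) ?_ hu continuous_const ?_
  · refine Continuous.if_le ((continuous_phiLoop _).comp (by fun_prop)) ?_ hu continuous_const ?_
    · refine Continuous.if_le ((continuous_phiLoop _).comp (by fun_prop))
        ((continuous_phiLoop _).comp (by fun_prop)) hu continuous_const ?_
      intro x hx
      norm_num [hx, phiLoop_zero, phiLoop_one]
    · intro x hx
      norm_num [hx, phiLoop_zero, phiLoop_one]
  · intro x hx
    norm_num [hx, phiLoop_zero, phiLoop_one]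

lemma cLoop_mem_HSet (nseq : ℕ → ℕ) (k : ℕ) (t : ℝ) : cLoop nseq k t ∈ HSet :=
  (cLoop_mem nseq k t).elim (Lcirc_subset_HSet _ ·) (Lcirc_subset_HSet _ ·)

lemma pMap_zero (nseq : ℕ → ℕ) (k : ℕ) : pMap nseq k 0 = 0 := by
  unfold pMap
  split_ifs <;> rfl

lemma pMap_cLoop_self (nseq : ℕ → ℕ) (k : ℕ) (t : ℝ) :
    pMap nseq k (cLoop nseq k t) = cLoop nseq k t :=
  if_pos (cLoop_mem nseq k t)

lemma pMap_eq_zero_of_mem_Lcirc {nseq : ℕ → ℕ} {k n : ℕ} {x : ℂ} (hx : x ∈ Lcirc n)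
    (hn : n ≠ nseq k) (hn' : n ≠ nseq k + 1) : pMap nseq k x = 0 := by
  unfold pMap
  split_ifs with h
  · exact h.elim (eq_zero_of_mem_Lcirc_of_mem_Lcirc hn hx)
      (eq_zero_of_mem_Lcirc_of_mem_Lcirc hn' hx)
  · rfl

lemma apply_add_one_lt_of_lt {nseq : ℕ → ℕ} (hsep : ∀ k, 1 ≤ k → nseq k + 1 < nseq (k + 1))
    {j k : ℕ} (hj : 1 ≤ j) (hjk : j < k) : nseq j + 1 < nseq k := by
  induction k, hjk using Nat.le_induction with
  | base => exact hsep j hj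
  | succ k hk ih => have := hsep k (by omega); omega

lemma pMap_cLoop_of_ne {nseq : ℕ → ℕ} (hsep : ∀ k, 1 ≤ k → nseq k + 1 < nseq (k + 1))
    {j k : ℕ} (hj : 1 ≤ j) (hk : 1 ≤ k) (hne : j ≠ k) (t : ℝ) :
    pMap nseq k (cLoop nseq j t) = 0 := by
  have hfar : nseq j + 1 < nseq k ∨ nseq k + 1 < nseq j :=
    hne.lt_or_gt.imp (apply_add_one_lt_of_lt hsep hj) (apply_add_one_lt_of_lt hsep hk)
  rcases cLoop_mem nseq j t with h | h <;> exact pMap_eq_zero_of_mem_Lcirc h (by omega) (by omega)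

section IterConcat

variable {len : ℝ} {f : ℝ → ℂ}

lemma iterConcat_mem {S : Set ℂ} (hf : ∀ y, f y ∈ S) (m : ℕ) (x : ℝ) :
    iterConcat len f m x ∈ S := by
  induction m generalizing x with
  | zero => exact hf x
  | succ m ih =>
    rw [iterConcat, concatAt]
    split_ifs
    exacts [hf x, ih _]

lemma iterConcat_apply_zero (hlen : 0 ≤ len) (m : ℕ) : iterConcat len f m 0 = f 0 := by
  cases m with
  | zero => rfl
  | succ m => rw [iterConcat, concatAt, if_pos hlen]

lemma continuous_iterConcat (hlen : 0 ≤ len) (hf : Continuous f) (hf_len : f len = f 0) (m : ℕ) :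
    Continuous (iterConcat len f m) := by
  induction m with
  | zero => exact hf
  | succ m ih =>
    refine Continuous.if_le hf (ih.comp (by fun_prop)) continuous_id continuous_const ?_
    rintro x rfl
    simp [iterConcat_apply_zero hlen, hf_len]

lemma iterConcat_nat_mul_add (hf_len : f len = f 0) {m N : ℕ} (hN : N ≤ m) {r : ℝ}
    (hr₀ : 0 ≤ r) (hr : r ≤ len) : iterConcat len f m (N * len + r) = f r := by
  induction m generalizing N with
  | zero => simp [Nat.le_zero.1 hN, iterConcat]
  | succ m ih =>
    rw [iterConcat, concatAt]
    rcases N with _ | N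
    · simp [hr]
    split_ifs with hle
    · have hNlen : 0 ≤ (N : ℝ) * len := mul_nonneg N.cast_nonneg (hr₀.trans hr)
      push_cast at hle
      obtain rfl : r = 0 := by nlinarith
      rw [show ((N + 1 : ℕ) : ℝ) * len + 0 = len by push_cast; nlinarith, hf_len]
    · rw [show ((N + 1 : ℕ) : ℝ) * len + r - len = N * len + r by push_cast; ring]
      exact ih (by omega)

lemma iterConcat_nat_mul (hlen : 0 ≤ len) (hf_len : f len = f 0) {m N : ℕ} (hN : N ≤ m + 1) :
    iterConcat len f m (N * len) = f 0 := by
  rcases hN.lt_or_eq with hN | rfl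
  · simpa using iterConcat_nat_mul_add hf_len (Nat.lt_succ_iff.1 hN) le_rfl hlen
  · rw [show ((m + 1 : ℕ) : ℝ) * len = m * len + len by push_cast; ring,
      iterConcat_nat_mul_add hf_len le_rfl hlen le_rfl, hf_len]

end IterConcat

section Ramp

def ramp (l a t : ℝ) : ℝ := max 0 (min (t - a) l)

variable {l a t : ℝ}

lemma ramp_of_le (h : t ≤ a) : ramp l a t = 0 :=
  max_eq_left ((min_le_left _ _).trans (by linarith))

lemma ramp_of_add_le (hl : 0 ≤ l) (h : a + l ≤ t) : ramp l a t = l := by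
  rw [ramp, min_eq_right (by linarith), max_eq_right hl]

lemma ramp_of_mem_Icc (h : t ∈ Set.Icc a (a + l)) : ramp l a t = t - a := by
  rw [ramp, min_eq_left (by linarith [h.2]), max_eq_right (by linarith [h.1])]

lemma ramp_nonneg : 0 ≤ ramp l a t := le_max_left _ _

lemma ramp_le (hl : 0 ≤ l) : ramp l a t ≤ l := max_le hl (min_le_right _ _)

lemma continuous_ramp : Continuous (ramp l a) := by
  unfold ramp
  fun_prop

variable {ι : Type*} {A : Finset ι} {x : ι → ℝ}

lemma sum_ramp_of_forall_notMem_Ioo (hl : 0 ≤ l) (h : ∀ i ∈ A, t ∉ Set.Ioo (x i) (x i + l)) :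
    ∑ i ∈ A, ramp l (x i) t = #{i ∈ A | x i + l ≤ t} * l := by
  rw [← nsmul_eq_mul, ← Finset.sum_const, Finset.sum_filter]
  refine Finset.sum_congr rfl fun i hi => ?_
  split_ifs with hle
  · exact ramp_of_add_le hl hle
  · exact ramp_of_le (not_lt.1 fun hlt => h i hi ⟨hlt, not_le.1 hle⟩)

lemma sum_ramp_of_mem_Icc [DecidableEq ι] (hl : 0 ≤ l) {j : ι} (hj : j ∈ A)
    (ht : t ∈ Set.Icc (x j) (x j + l)) (h : ∀ i ∈ A, i ≠ j → t ∉ Set.Ioo (x i) (x i + l)) :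
    ∑ i ∈ A, ramp l (x i) t = #{i ∈ A.erase j | x i + l ≤ t} * l + (t - x j) := by
  rw [← Finset.add_sum_erase _ _ hj, ramp_of_mem_Icc ht, sum_ramp_of_forall_notMem_Ioo hl
    fun i hi => h i (Finset.mem_of_mem_erase hi) (Finset.ne_of_mem_erase hi), add_comm]

end Ramp

noncomputable def levelSet (k : ℕ) : Finset (List ℕ+) := (BTuples k).image List.ofFn

lemma mem_levelSet {k : ℕ} (hk : 1 ≤ k) {s : List ℕ+} :
    s ∈ levelSet k ↔ s ∈ BSet ∧ s.length = k := by
  rw [levelSet, Finset.mem_image]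
  constructor
  · rintro ⟨v, hv, rfl⟩
    exact ⟨ofFn_mem_BSet_iff.2 ⟨hk, hv⟩, List.length_ofFn⟩
  · rintro ⟨hs, rfl⟩
    rw [← List.ofFn_getElem (xs := s)] at hs
    exact ⟨_, (ofFn_mem_BSet_iff.1 hs).2, List.ofFn_getElem⟩

lemma card_levelSet (k : ℕ) : #(levelSet k) = k ! := by
  rw [levelSet, Finset.card_image_of_injective _ List.ofFn_injective, card_BTuples]

lemma notMem_Ioo_of_mem_Icc {s s' : List ℕ+} (hs : s ∈ BSet) (hs' : s' ∈ BSet) (hne : s' ≠ s)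
    {t : ℝ} (ht : t ∈ Set.Icc (tau s) (tau s + lam s.length)) :
    t ∉ Set.Ioo (tau s') (tau s' + lam s'.length) := by
  rintro ⟨ht₁, ht₂⟩
  rcases hne.lt_or_gt with h | h
  · linarith [tau_add_lam_le_tau hs' h, ht.1]
  · linarith [tau_add_lam_le_tau hs h, ht.2]

noncomputable def levelTime (k : ℕ) (t : ℝ) : ℝ := ∑ s ∈ levelSet k, ramp (lam k) (tau s) t

lemma levelTime_nonneg (k : ℕ) (t : ℝ) : 0 ≤ levelTime k t :=
  Finset.sum_nonneg fun _ _ => ramp_nonneg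

lemma levelTime_le (k : ℕ) (t : ℝ) : levelTime k t ≤ k ! * lam k := by
  rw [← card_levelSet, ← nsmul_eq_mul, ← Finset.sum_const]
  exact Finset.sum_le_sum fun _ _ => ramp_le (lam_pos k).le

lemma levelTime_zero (k : ℕ) : levelTime k 0 = 0 :=
  Finset.sum_eq_zero fun s _ => ramp_of_le (tau_nonneg s)

lemma levelTime_one {k : ℕ} (hk : 1 ≤ k) : levelTime k 1 = k ! * lam k := by
  rw [← card_levelSet, ← nsmul_eq_mul, ← Finset.sum_const]
  refine Finset.sum_congr rfl fun s hs => ramp_of_add_le (lam_pos k).le ?_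
  obtain ⟨hs, hlen⟩ := (mem_levelSet hk).1 hs
  exact hlen ▸ tau_add_lam_le_one hs

lemma continuous_levelTime (k : ℕ) : Continuous (levelTime k) :=
  continuous_finsetSum _ fun _ _ => continuous_ramp

noncomputable def levelReparam (k : ℕ) (u : unitInterval) : unitInterval :=
  ⟨levelTime k u / (k ! * lam k), div_nonneg (levelTime_nonneg k u) (by positivity [lam_pos k]),
    div_le_one_of_le₀ (levelTime_le k u) (by positivity [lam_pos k])⟩

lemma continuous_levelReparam (k : ℕ) : Continuous (levelReparam k) :=
  (((continuous_levelTime k).comp continuous_subtype_val).div_const _).subtype_mk _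

lemma levelReparam_zero (k : ℕ) : levelReparam k 0 = 0 :=
  Subtype.ext (by simp [levelReparam, levelTime_zero])

lemma levelReparam_one {k : ℕ} (hk : 1 ≤ k) : levelReparam k 1 = 1 :=
  Subtype.ext (by simp [levelReparam, levelTime_one hk, (lam_pos k).ne', k.factorial_ne_zero])

noncomputable def iterCommutatorPath (nseq : ℕ → ℕ) (k : ℕ) :
    Path (⟨0, zero_mem_HSet⟩ : HSet) ⟨0, zero_mem_HSet⟩ where
  toFun u := ⟨iterConcat (lam k) (cLoop nseq k) (k.factorial - 1) (u * (k ! * lam k)),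
    iterConcat_mem (cLoop_mem_HSet nseq k) _ _⟩
  continuous_toFun := ((continuous_iterConcat (lam_pos k).le (continuous_cLoop nseq k)
    (cLoop_lam_eq_cLoop_zero nseq k) _).comp (by fun_prop)).subtype_mk _
  source' := by
    ext
    simp [iterConcat_apply_zero (lam_pos k).le, cLoop_zero]
  target' := by
    ext
    simpa [cLoop_zero] using iterConcat_nat_mul (lam_pos k).le (cLoop_lam_eq_cLoop_zero nseq k)
      (Nat.sub_add_cancel k.factorial_pos).ge

section SigmaLoop

variable {nseq : ℕ → ℕ} {σ₁ : ℝ → ℂ}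

lemma sigma_eq_cLoop
    (hval : ∀ s ∈ BSet, ∀ t ∈ Set.Icc (tau s) (tau (s ++ [1])),
      σ₁ t = cLoop nseq s.length (t - tau s))
    {s : List ℕ+} (hs : s ∈ BSet) {t : ℝ} (ht : t ∈ Set.Icc (tau s) (tau s + lam s.length)) :
    σ₁ t = cLoop nseq s.length (t - tau s) :=
  hval s hs t (tau_append_one hs ▸ ht)

/-- Right endpoints `e` of intervals accumulate at `t`, `σ₁ e = 0`, and `d x 0 = ‖x‖`. -/
lemma sigma_eq_zero_of_forall_notMem
    (hlip : ∀ t ∈ Set.Icc (0 : ℝ) 1, ∀ t' ∈ Set.Icc (0 : ℝ) 1,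
      HEdist (σ₁ t) (σ₁ t') ≤ |t - t'|)
    (hval : ∀ s ∈ BSet, ∀ t ∈ Set.Icc (tau s) (tau (s ++ [1])),
      σ₁ t = cLoop nseq s.length (t - tau s))
    {t : ℝ} (ht : t ∈ Set.Icc (0 : ℝ) 1)
    (hgap : ∀ s ∈ BSet, t ∉ Set.Icc (tau s) (tau s + lam s.length)) : σ₁ t = 0 := by
  have ht₀ : 0 < t := by
    refine ht.1.lt_of_ne fun h => hgap [1] (by simp [mem_BSet_iff]) ?_
    simp [← h, tau_singleton_one, (lam_pos _).le]
  by_contra hne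
  set ε := min ‖σ₁ t‖ t
  have hε : 0 < ε := lt_min (norm_pos_iff.2 hne) ht₀
  obtain ⟨s, hs, he⟩ := exists_tau_add_lam_mem_Ioo ht.2 hε (min_le_right _ _) hgap
  have hσe : σ₁ (tau s + lam s.length) = 0 := by
    rw [sigma_eq_cLoop hval hs ⟨by linarith [lam_pos s.length], le_rfl⟩, add_sub_cancel_left,
      cLoop_lam]
  have hdist := hlip t ht _ ⟨by linarith [tau_nonneg s, lam_pos s.length], tau_add_lam_le_one hs⟩
  rw [hσe, HEdist_zero_right, abs_of_pos (by linarith [he.2])] at hdist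
  linarith [he.1, min_le_left ‖σ₁ t‖ t]

lemma pMap_sigma_eq_zero (hsep : ∀ k, 1 ≤ k → nseq k + 1 < nseq (k + 1))
    (hlip : ∀ t ∈ Set.Icc (0 : ℝ) 1, ∀ t' ∈ Set.Icc (0 : ℝ) 1,
      HEdist (σ₁ t) (σ₁ t') ≤ |t - t'|)
    (hval : ∀ s ∈ BSet, ∀ t ∈ Set.Icc (tau s) (tau (s ++ [1])),
      σ₁ t = cLoop nseq s.length (t - tau s))
    {k : ℕ} (hk : 1 ≤ k) {t : ℝ} (ht : t ∈ Set.Icc (0 : ℝ) 1)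
    (hgap : ∀ s ∈ BSet, s.length = k → t ∉ Set.Icc (tau s) (tau s + lam s.length)) :
    pMap nseq k (σ₁ t) = 0 := by
  by_cases h : ∃ s ∈ BSet, t ∈ Set.Icc (tau s) (tau s + lam s.length)
  · obtain ⟨s, hs, hts⟩ := h
    rw [sigma_eq_cLoop hval hs hts]
    exact pMap_cLoop_of_ne hsep hs.1 hk (fun hlen => hgap s hs hlen hts) _
  · push Not at h
    rw [sigma_eq_zero_of_forall_notMem hlip hval ht h, pMap_zero]

theorem iterConcat_levelTime (hsep : ∀ k, 1 ≤ k → nseq k + 1 < nseq (k + 1))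
    (hlip : ∀ t ∈ Set.Icc (0 : ℝ) 1, ∀ t' ∈ Set.Icc (0 : ℝ) 1,
      HEdist (σ₁ t) (σ₁ t') ≤ |t - t'|)
    (hval : ∀ s ∈ BSet, ∀ t ∈ Set.Icc (tau s) (tau (s ++ [1])),
      σ₁ t = cLoop nseq s.length (t - tau s))
    {k : ℕ} (hk : 1 ≤ k) {t : ℝ} (ht : t ∈ Set.Icc (0 : ℝ) 1) :
    iterConcat (lam k) (cLoop nseq k) (k.factorial - 1) (levelTime k t) = pMap nseq k (σ₁ t) := by
  classical
  have hlam := (lam_pos k).le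
  by_cases h : ∃ s ∈ levelSet k, t ∈ Set.Icc (tau s) (tau s + lam k)
  · obtain ⟨s, hsA, hts⟩ := h
    obtain ⟨hs, rfl⟩ := (mem_levelSet hk).1 hsA
    have hothers : ∀ s' ∈ levelSet s.length, s' ≠ s →
        t ∉ Set.Ioo (tau s') (tau s' + lam s.length) := fun s' hs' hne => by
      obtain ⟨hs'B, hlen⟩ := (mem_levelSet hk).1 hs'
      exact hlen ▸ notMem_Ioo_of_mem_Icc hs hs'B hne hts
    have hN : #{s' ∈ (levelSet s.length).erase s | tau s' + lam s.length ≤ t} ≤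
        s.length.factorial - 1 := by
      rw [← card_levelSet, ← Finset.card_erase_of_mem hsA]
      exact Finset.card_filter_le _ _
    rw [levelTime, sum_ramp_of_mem_Icc hlam hsA hts hothers,
      iterConcat_nat_mul_add (cLoop_lam_eq_cLoop_zero nseq _) hN (by linarith [hts.1])
        (by linarith [hts.2]), sigma_eq_cLoop hval hs hts, pMap_cLoop_self]
  · push Not at h
    have hN : #{s ∈ levelSet k | tau s + lam k ≤ t} ≤ k.factorial - 1 + 1 := by
      rw [Nat.sub_add_cancel k.factorial_pos, ← card_levelSet]
      exact Finset.card_filter_le _ _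
    have hgap : ∀ s ∈ BSet, s.length = k → t ∉ Set.Icc (tau s) (tau s + lam s.length) :=
      fun s hs hlen => hlen ▸ h s ((mem_levelSet hk).2 ⟨hs, hlen⟩)
    rw [levelTime, sum_ramp_of_forall_notMem_Ioo hlam fun s hs hts =>
        h s hs (Set.Ioo_subset_Icc_self hts),
      iterConcat_nat_mul hlam (cLoop_lam_eq_cLoop_zero nseq k) hN, cLoop_zero,
      pMap_sigma_eq_zero hsep hlip hval hk ht hgap]

end SigmaLoop

theorem pMap_sigma_homotopic_iterated_commutator_general (nseq : ℕ → ℕ)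
    (hsep : ∀ k, 1 ≤ k → nseq k + 1 < nseq (k + 1))
    (σ₁ : ℝ → ℂ)
    (hlip : ∀ t ∈ Set.Icc (0 : ℝ) 1, ∀ t' ∈ Set.Icc (0 : ℝ) 1,
      HEdist (σ₁ t) (σ₁ t') ≤ |t - t'|)
    (hval : ∀ s ∈ BSet, ∀ t ∈ Set.Icc (tau s) (tau (s ++ [1])),
      σ₁ t = cLoop nseq s.length (t - tau s))
    (k : ℕ) (hk : 1 ≤ k) :
    ∃ γ₁ γ₂ : Path (⟨0, zero_mem_HSet⟩ : HSet) (⟨0, zero_mem_HSet⟩ : HSet),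
      (∀ t : unitInterval, (γ₁ t : ℂ) = pMap nseq k (σ₁ (t : ℝ))) ∧
      (∀ t : unitInterval, (γ₂ t : ℂ) =
        iterConcat (lam k) (cLoop nseq k) (Nat.factorial k - 1)
          ((t : ℝ) * (Nat.factorial k * lam k))) ∧
      γ₁.Homotopic γ₂ := by
  have hφ := continuous_levelReparam k
  refine ⟨(iterCommutatorPath nseq k).reparam _ hφ (levelReparam_zero k) (levelReparam_one hk),
    iterCommutatorPath nseq k, fun t => ?_, fun t => rfl,
    ⟨(Path.Homotopy.reparam _ _ hφ (levelReparam_zero k) (levelReparam_one hk)).symm⟩⟩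
  change iterConcat _ _ _ (levelTime k t / (k ! * lam k) * (k ! * lam k)) = _
  rw [div_mul_cancel₀ _ (by positivity [lam_pos k])]
  exact iterConcat_levelTime hsep hlip hval hk t.2

/-- For every `k ≥ 1`, the loop `p_k ∘ σ_1 : [0,1] → ℍ` (a loop based at `(0,0)`) is
homotopic relative to its endpoints to the `k!`-fold concatenation `c_k ⋯ c_k`
(defined on `[0, k! · λ k]` and affinely reparametrized to `[0,1]`). -/
theorem pMap_sigma_homotopic_iterated_commutator (nseq : ℕ → ℕ)
    (hpos : ∀ k, 1 ≤ k → 1 ≤ nseq k)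
    (hlamseq : ∀ k, 1 ≤ k → 8 * Real.pi / (nseq k : ℝ) ≤ lam k)
    (hsep : ∀ k, 1 ≤ k → nseq k + 1 < nseq (k + 1))
    (σ₁ : ℝ → ℂ)
    (hmem : ∀ t ∈ Set.Icc (0 : ℝ) 1, σ₁ t ∈ HSet)
    (hlip : ∀ t ∈ Set.Icc (0 : ℝ) 1, ∀ t' ∈ Set.Icc (0 : ℝ) 1,
      HEdist (σ₁ t) (σ₁ t') ≤ |t - t'|)
    (hval : ∀ s ∈ BSet, ∀ t ∈ Set.Icc (tau s) (tau (s ++ [1])),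
      σ₁ t = cLoop nseq s.length (t - tau s))
    (k : ℕ) (hk : 1 ≤ k) :
    ∃ γ₁ γ₂ : Path (⟨0, zero_mem_HSet⟩ : HSet) (⟨0, zero_mem_HSet⟩ : HSet),
      (∀ t : unitInterval, (γ₁ t : ℂ) = pMap nseq k (σ₁ (t : ℝ))) ∧
      (∀ t : unitInterval, (γ₂ t : ℂ) =
        iterConcat (lam k) (cLoop nseq k) (Nat.factorial k - 1)
          ((t : ℝ) * (Nat.factorial k * lam k))) ∧
      γ₁.Homotopic γ₂ :=
  pMap_sigma_homotopic_iterated_commutator_general nseq hsep σ₁ hlip hval k hk
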